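/- Let r ≥ 1, b ≥ 2, n ≥ 2^{r+1}, q = 2^b, and let −1 ≤ i ≤ r−2. Let R = C ⊆ F_q^n be the span of the first 2^{r+1} − 2^{r−i} standard basis vectors. Let G be the simple graph whose vertex set is V = {M ∈ F_q^{n×n} : rank(M) = 2^{r−i−1}, rowspan(M) ∩ R = {0}, colspan(M) ∩ C = {0}}, with M adjacent to M' if and only if M ≠ M' and there exist L₁, L₂, L₃ ∈ F_q^{n×n}, each of rank 2^{r−i−2}, such that M = L₁ + L₂, M' = L₁ + L₃, rank(L₁ + L₂ + L₃) = 3·2^{r−i−2}, rowspan(L₁ + L₂ + L₃) ∩ R = {0}, and colspan(L₁ + L₂ + L₃) ∩ C = {0}. Then G is connected and non-bipartite. -/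

import Mathlib

/-!
Write `k = 2^{r-j-1}`: vertices have rank `2k`, and `L₁ + L₂ ∼ L₁ + L₃` for rank-`k` matrices
whose sum has rank `3k`. Everything rests on `rank (A + B) = rank A + rank B` whenever the row
spaces of `A` and `B` meet trivially and so do their column spaces.

Connectivity: if `rowspan Y ∩ (rowspan X + R) = 0` and likewise for columns, split `X = A + B`
and `Y = C₁ + C₂` into rank-`k` pieces; then `X ∼ A + C₁ ∼ Y`. Any two vertices have a common
vertex in this position relative to both: as `dim R + 4k ≤ n` and two proper subspaces never
cover a vector space, it can be built one rank-one summand at a time.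

Non-bipartiteness: rank-`k` matrices `L₀, L₁, L₂` whose row and column spaces are independent
of each other and of `R` give the triangle `L₀ + L₁, L₀ + L₂, L₁ + L₂`.
-/

/-- The row space of a square matrix: the span of its rows. -/
def rowSpace {F : Type*} [Field F] {n : ℕ} (M : Matrix (Fin n) (Fin n) F) :
    Submodule F (Fin n → F) :=
  Submodule.span F (Set.range fun a => M a)

/-- The column space of a square matrix: the span of its columns. -/
def colSpace {F : Type*} [Field F] {n : ℕ} (M : Matrix (Fin n) (Fin n) F) :
    Submodule F (Fin n → F) :=
  Submodule.span F (Set.range fun a => fun b => M b a)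

/-- The span of the first `d` standard basis vectors of `F^n`. -/
def stdSpan (F : Type*) [Field F] (n d : ℕ) : Submodule F (Fin n → F) :=
  Submodule.span F {v | ∃ a : Fin n, (a : ℕ) < d ∧ v = Pi.single a 1}

/-- The graph of Statement 17, reindexed by `j = i + 1` (so the original range
`−1 ≤ i ≤ r−2` becomes `0 ≤ j ≤ r−1`, and `2^{r−i} = 2^{r+1−j}`,
`2^{r−i−1} = 2^{r−j}`, `2^{r−i−2} = 2^{r−j−1}`). With
`R = C` the span of the first `2^{r+1} − 2^{r+1−j}` standard basis vectors: vertices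
are the matrices `M ∈ F_q^{n×n}` with `rank M = 2^{r−j}`, `rowspan(M) ∩ R = 0` and
`colspan(M) ∩ C = 0`; `M ∼ M'` iff `M ≠ M'` and there are `L₁, L₂, L₃`, each of rank
`2^{r−j−1}`, with `M = L₁+L₂`, `M' = L₁+L₃`, `rank(L₁+L₂+L₃) = 3·2^{r−j−1}`, and the
row and column spans of `L₁+L₂+L₃` meeting `R` resp. `C` trivially. -/
def linkG2 (b r n j : ℕ) :
    SimpleGraph {M : Matrix (Fin n) (Fin n) (GaloisField 2 b) //
      M.rank = 2 ^ (r - j) ∧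
      rowSpace M ⊓ stdSpan (GaloisField 2 b) n (2 ^ (r + 1) - 2 ^ (r + 1 - j)) = ⊥ ∧
      colSpace M ⊓ stdSpan (GaloisField 2 b) n (2 ^ (r + 1) - 2 ^ (r + 1 - j)) = ⊥} where
  Adj M M' := M ≠ M' ∧
    ∃ L₁ L₂ L₃ : Matrix (Fin n) (Fin n) (GaloisField 2 b),
      L₁.rank = 2 ^ (r - j - 1) ∧ L₂.rank = 2 ^ (r - j - 1) ∧ L₃.rank = 2 ^ (r - j - 1) ∧
      M.val = L₁ + L₂ ∧ M'.val = L₁ + L₃ ∧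
      (L₁ + L₂ + L₃).rank = 3 * 2 ^ (r - j - 1) ∧
      rowSpace (L₁ + L₂ + L₃) ⊓
        stdSpan (GaloisField 2 b) n (2 ^ (r + 1) - 2 ^ (r + 1 - j)) = ⊥ ∧
      colSpace (L₁ + L₂ + L₃) ⊓
        stdSpan (GaloisField 2 b) n (2 ^ (r + 1) - 2 ^ (r + 1 - j)) = ⊥
  symm := by
    refine ⟨?_⟩
    rintro M M' ⟨h1, L₁, L₂, L₃, hL1, hL2, hL3, hM, hM', hs, hrow, hcol⟩
    refine ⟨Ne.symm h1, L₁, L₃, L₂, hL1, hL3, hL2, hM', hM, ?_, ?_, ?_⟩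
    · rwa [add_right_comm]
    · rwa [add_right_comm]
    · rwa [add_right_comm]
  loopless := ⟨fun M h => h.1 rfl⟩

open Module Matrix

variable {F : Type*} [Field F] {n : ℕ}

section RowColSpaces

lemma rowSpace_transpose (M : Matrix (Fin n) (Fin n) F) : rowSpace Mᵀ = colSpace M := rfl

lemma colSpace_transpose (M : Matrix (Fin n) (Fin n) F) : colSpace Mᵀ = rowSpace M := rfl

lemma finrank_colSpace (M : Matrix (Fin n) (Fin n) F) : finrank F (colSpace M) = M.rank :=
  (rank_eq_finrank_span_cols M).symm

lemma finrank_rowSpace (M : Matrix (Fin n) (Fin n) F) : finrank F (rowSpace M) = M.rank := by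
  rw [← colSpace_transpose, finrank_colSpace, rank_transpose]

lemma rowSpace_zero : rowSpace (0 : Matrix (Fin n) (Fin n) F) = ⊥ :=
  Submodule.span_eq_bot.2 (by rintro _ ⟨a, rfl⟩; rfl)

lemma rowSpace_add_le (A B : Matrix (Fin n) (Fin n) F) :
    rowSpace (A + B) ≤ rowSpace A ⊔ rowSpace B :=
  Submodule.span_le.2 <| by
    rintro _ ⟨a, rfl⟩
    exact Submodule.add_mem_sup (Submodule.subset_span ⟨a, rfl⟩) (Submodule.subset_span ⟨a, rfl⟩)

lemma colSpace_add_le (A B : Matrix (Fin n) (Fin n) F) :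
    colSpace (A + B) ≤ colSpace A ⊔ colSpace B := by
  simpa only [← rowSpace_transpose, transpose_add] using rowSpace_add_le Aᵀ Bᵀ

lemma rank_add_le (A B : Matrix (Fin n) (Fin n) F) : (A + B).rank ≤ A.rank + B.rank := by
  rw [← finrank_colSpace, ← finrank_colSpace, ← finrank_colSpace]
  exact (Submodule.finrank_mono (colSpace_add_le A B)).trans
    (Submodule.finrank_add_le_finrank_add_finrank _ _)

lemma rowSpace_add_of_rank_add {A B : Matrix (Fin n) (Fin n) F}
    (h : (A + B).rank = A.rank + B.rank) : rowSpace (A + B) = rowSpace A ⊔ rowSpace B := by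
  refine Submodule.eq_of_le_of_finrank_le (rowSpace_add_le A B) ?_
  rw [finrank_rowSpace, h, ← finrank_rowSpace, ← finrank_rowSpace]
  exact Submodule.finrank_add_le_finrank_add_finrank _ _

lemma colSpace_add_of_rank_add {A B : Matrix (Fin n) (Fin n) F}
    (h : (A + B).rank = A.rank + B.rank) : colSpace (A + B) = colSpace A ⊔ colSpace B := by
  simp only [← rowSpace_transpose, transpose_add]
  exact rowSpace_add_of_rank_add (by simpa only [← transpose_add, rank_transpose] using h)

lemma rowSpace_le_and_colSpace_le_of_rank_add {A B : Matrix (Fin n) (Fin n) F}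
    (h : (A + B).rank = A.rank + B.rank) :
    rowSpace A ≤ rowSpace (A + B) ∧ colSpace A ≤ colSpace (A + B) := by
  rw [rowSpace_add_of_rank_add h, colSpace_add_of_rank_add h]
  exact ⟨le_sup_left, le_sup_left⟩

lemma mulVec_mem_colSpace (M : Matrix (Fin n) (Fin n) F) (x : Fin n → F) :
    M *ᵥ x ∈ colSpace M := by
  have hx : M *ᵥ x ∈ LinearMap.range M.mulVecLin := ⟨x, rfl⟩
  rw [range_mulVecLin] at hx
  exact hx

lemma add_mulVec_eq_zero_iff {A B : Matrix (Fin n) (Fin n) F}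
    (hcol : Disjoint (colSpace A) (colSpace B)) (x : Fin n → F) :
    (A + B) *ᵥ x = 0 ↔ A *ᵥ x = 0 ∧ B *ᵥ x = 0 := by
  refine ⟨fun h => ?_, fun h => by rw [add_mulVec, h.1, h.2, add_zero]⟩
  rw [add_mulVec] at h
  have hA : A *ᵥ x = 0 := by
    refine Submodule.disjoint_def.1 hcol _ (mulVec_mem_colSpace A x) ?_
    rw [eq_neg_of_add_eq_zero_left h, ← mulVec_neg]
    exact mulVec_mem_colSpace B (-x)
  exact ⟨hA, by rwa [hA, zero_add] at h⟩

/-- With independent column spaces, `A + B` has the same kernel as `A` stacked over `B`, whose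
rank is the dimension of `rowSpace A ⊔ rowSpace B`. -/
lemma rank_add_of_disjoint {A B : Matrix (Fin n) (Fin n) F}
    (hrow : Disjoint (rowSpace A) (rowSpace B)) (hcol : Disjoint (colSpace A) (colSpace B)) :
    (A + B).rank = A.rank + B.rank := by
  have hker : LinearMap.ker (A + B).mulVecLin = LinearMap.ker (fromRows A B).mulVecLin := by
    ext x
    simp only [LinearMap.mem_ker, mulVecLin_apply, add_mulVec_eq_zero_iff hcol, fromRows_mulVec,
      funext_iff, Sum.forall, Sum.elim_inl, Sum.elim_inr, Pi.zero_apply]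
  have hstack : (fromRows A B).rank = A.rank + B.rank := by
    have hrows : Set.range (fromRows A B).row = Set.range A ∪ Set.range B :=
      Set.Sum.elim_range A B
    rw [rank_eq_finrank_span_row, hrows, Submodule.span_union, ← finrank_rowSpace,
      ← finrank_rowSpace, ← Submodule.finrank_sup_add_finrank_inf_eq, disjoint_iff.1 hrow,
      finrank_bot, add_zero]
    rfl
  have h₁ := LinearMap.finrank_range_add_finrank_ker (A + B).mulVecLin
  have h₂ := LinearMap.finrank_range_add_finrank_ker (fromRows A B).mulVecLin
  rw [hker] at h₁
  change (A + B).rank + _ = _ at h₁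
  change (fromRows A B).rank + _ = _ at h₂
  omega

end RowColSpaces

section RankOne

lemma rowSpace_vecMulVec {u : Fin n → F} (hu : u ≠ 0) (v : Fin n → F) :
    rowSpace (vecMulVec u v) = F ∙ v := by
  refine le_antisymm (Submodule.span_le.2 ?_) ?_
  · rintro _ ⟨a, rfl⟩
    rw [SetLike.mem_coe, Submodule.mem_span_singleton]
    refine ⟨u a, ?_⟩
    ext
    simp [vecMulVec_apply]
  · obtain ⟨a, ha⟩ := Function.ne_iff.1 hu
    rw [Submodule.span_singleton_le_iff_mem]
    have hrow : vecMulVec u v a ∈ rowSpace (vecMulVec u v) := Submodule.subset_span ⟨a, rfl⟩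
    convert Submodule.smul_mem _ (u a)⁻¹ hrow
    ext
    simp [vecMulVec_apply, inv_mul_cancel_left₀ (ha : u a ≠ 0)]

lemma colSpace_vecMulVec (u : Fin n → F) {v : Fin n → F} (hv : v ≠ 0) :
    colSpace (vecMulVec u v) = F ∙ u := by
  rw [← rowSpace_transpose, transpose_vecMulVec, rowSpace_vecMulVec hv]

lemma rank_vecMulVec_eq_one {u v : Fin n → F} (hu : u ≠ 0) (hv : v ≠ 0) :
    (vecMulVec u v).rank = 1 := by
  rw [← finrank_rowSpace, rowSpace_vecMulVec hu, finrank_span_singleton hv]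

end RankOne

section Splitting

lemma exists_mul_eq_of_card_eq_rank {ι : Type*} [Fintype ι] [DecidableEq ι]
    (M : Matrix (Fin n) (Fin n) F) (h : Fintype.card ι = M.rank) :
    ∃ (C : Matrix (Fin n) ι F) (W : Matrix ι (Fin n) F), C * W = M := by
  let f := M.mulVecLin
  let e : LinearMap.range f ≃ₗ[F] (ι → F) :=
    LinearEquiv.ofFinrankEq _ _ (by rw [finrank_fintype_fun_eq_card, h]; rfl)
  refine ⟨LinearMap.toMatrix' ((LinearMap.range f).subtype ∘ₗ e.symm.toLinearMap),
    LinearMap.toMatrix' (e.toLinearMap ∘ₗ f.rangeRestrict), ?_⟩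
  rw [← LinearMap.toMatrix'_comp, LinearMap.comp_assoc, ← LinearMap.comp_assoc _ e.toLinearMap,
    LinearEquiv.symm_comp, LinearMap.id_comp]
  exact LinearMap.toMatrix'_toLin' M

lemma exists_add_eq_of_rank_eq_add (M : Matrix (Fin n) (Fin n) F) {s t : ℕ}
    (h : M.rank = s + t) :
    ∃ A B : Matrix (Fin n) (Fin n) F, M = A + B ∧ A.rank = s ∧ B.rank = t := by
  obtain ⟨C, W, hCW⟩ := exists_mul_eq_of_card_eq_rank (ι := Fin s ⊕ Fin t) M (by simp [h])
  have hM : M = C.toCols₁ * W.toRows₁ + C.toCols₂ * W.toRows₂ := by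
    rw [← fromCols_mul_fromRows, fromCols_toCols, fromRows_toRows, hCW]
  have hA : (C.toCols₁ * W.toRows₁).rank ≤ s := (rank_mul_le_right _ _).trans (rank_le_height _)
  have hB : (C.toCols₂ * W.toRows₂).rank ≤ t := (rank_mul_le_right _ _).trans (rank_le_height _)
  have hAB := rank_add_le (C.toCols₁ * W.toRows₁) (C.toCols₂ * W.toRows₂)
  rw [← hM] at hAB
  exact ⟨_, _, hM, by omega, by omega⟩

end Splitting

section Avoidance

def Avoids (P Q : Submodule F (Fin n → F)) (M : Matrix (Fin n) (Fin n) F) : Prop :=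
  Disjoint (rowSpace M) P ∧ Disjoint (colSpace M) Q

variable {P Q P' Q' : Submodule F (Fin n → F)} {A B M : Matrix (Fin n) (Fin n) F}

lemma avoids_iff : Avoids P Q M ↔ rowSpace M ⊓ P = ⊥ ∧ colSpace M ⊓ Q = ⊥ :=
  and_congr disjoint_iff disjoint_iff

lemma Avoids.mono (h : Avoids P Q M) (hP : P' ≤ P) (hQ : Q' ≤ Q) : Avoids P' Q' M :=
  ⟨h.1.mono_right hP, h.2.mono_right hQ⟩

lemma Avoids.of_le (h : Avoids P Q M) (hrow : rowSpace A ≤ rowSpace M)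
    (hcol : colSpace A ≤ colSpace M) : Avoids P Q A :=
  ⟨h.1.mono_left hrow, h.2.mono_left hcol⟩

lemma avoids_zero : Avoids P Q (0 : Matrix (Fin n) (Fin n) F) := by
  rw [Avoids, ← rowSpace_transpose, transpose_zero, rowSpace_zero]
  exact ⟨disjoint_bot_left, disjoint_bot_left⟩

lemma Avoids.add (hA : Avoids P Q A) (hB : Avoids (rowSpace A ⊔ P) (colSpace A ⊔ Q) B) :
    (A + B).rank = A.rank + B.rank ∧ Avoids P Q (A + B) := by
  have hrank := rank_add_of_disjoint (hB.1.mono_right le_sup_left).symm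
    (hB.2.mono_right le_sup_left).symm
  refine ⟨hrank, ?_, ?_⟩
  · rw [rowSpace_add_of_rank_add hrank, sup_comm]
    exact hA.1.disjoint_sup_left_of_disjoint_sup_right hB.1
  · rw [colSpace_add_of_rank_add hrank, sup_comm]
    exact hA.2.disjoint_sup_left_of_disjoint_sup_right hB.2

lemma exists_notMem_and_notMem_of_ne_top {V : Type*} [AddCommGroup V] [Module F V]
    {p q : Submodule F V} (hp : p ≠ ⊤) (hq : q ≠ ⊤) : ∃ v, v ∉ p ∧ v ∉ q := by
  by_contra! h
  have hcover : ((⊤ : Submodule F V) : Set V) ⊆ p ∪ q := fun v _ => or_iff_not_imp_left.2 (h v)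
  rcases AddSubgroupClass.subset_union.1 hcover with h' | h'
  exacts [hp (top_le_iff.1 h'), hq (top_le_iff.1 h')]

lemma exists_rank_eq_avoids {P₁ Q₁ P₂ Q₂ : Submodule F (Fin n → F)} {m : ℕ}
    (hP₁ : finrank F P₁ + m ≤ n) (hQ₁ : finrank F Q₁ + m ≤ n)
    (hP₂ : finrank F P₂ + m ≤ n) (hQ₂ : finrank F Q₂ + m ≤ n) :
    ∃ M : Matrix (Fin n) (Fin n) F, M.rank = m ∧ Avoids P₁ Q₁ M ∧ Avoids P₂ Q₂ M := by
  induction m with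
  | zero => exact ⟨0, rank_zero, avoids_zero, avoids_zero⟩
  | succ m ih =>
    obtain ⟨M, hM, h₁, h₂⟩ := ih (by omega) (by omega) (by omega) (by omega)
    have hproper (S T : Submodule F (Fin n → F)) (hS : finrank F S = m)
        (hT : finrank F T + (m + 1) ≤ n) : S ⊔ T ≠ ⊤ := by
      intro htop
      have := Submodule.finrank_add_le_finrank_add_finrank S T
      rw [htop, finrank_top, finrank_fin_fun] at this
      omega
    have hrow : finrank F (rowSpace M) = m := by rw [finrank_rowSpace, hM]
    have hcol : finrank F (colSpace M) = m := by rw [finrank_colSpace, hM]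
    obtain ⟨v, hv₁, hv₂⟩ :=
      exists_notMem_and_notMem_of_ne_top (hproper _ _ hrow hP₁) (hproper _ _ hrow hP₂)
    obtain ⟨u, hu₁, hu₂⟩ :=
      exists_notMem_and_notMem_of_ne_top (hproper _ _ hcol hQ₁) (hproper _ _ hcol hQ₂)
    have hv : v ≠ 0 := by rintro rfl; exact hv₁ (zero_mem _)
    have hu : u ≠ 0 := by rintro rfl; exact hu₁ (zero_mem _)
    have hE {P Q : Submodule F (Fin n → F)} (hvP : v ∉ rowSpace M ⊔ P)
        (huQ : u ∉ colSpace M ⊔ Q) : Avoids (rowSpace M ⊔ P) (colSpace M ⊔ Q) (vecMulVec u v) := by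
      rw [Avoids, rowSpace_vecMulVec hu, colSpace_vecMulVec u hv]
      exact ⟨((Submodule.disjoint_span_singleton' hv).2 hvP).symm,
        ((Submodule.disjoint_span_singleton' hu).2 huQ).symm⟩
    refine ⟨M + vecMulVec u v, ?_, (h₁.add (hE hv₁ hu₁)).2, (h₂.add (hE hv₂ hu₂)).2⟩
    rw [(h₁.add (hE hv₁ hu₁)).1, hM, rank_vecMulVec_eq_one hu hv]

lemma exists_rank_eq_avoids_sup (R : Submodule F (Fin n → F)) (X Y : Matrix (Fin n) (Fin n) F)
    {m : ℕ} (hX : X.rank + finrank F R + m ≤ n) (hY : Y.rank + finrank F R + m ≤ n) :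
    ∃ Z : Matrix (Fin n) (Fin n) F, Z.rank = m ∧
      Avoids (rowSpace X ⊔ R) (colSpace X ⊔ R) Z ∧ Avoids (rowSpace Y ⊔ R) (colSpace Y ⊔ R) Z := by
  have hrow (M : Matrix (Fin n) (Fin n) F) : finrank F ↥(rowSpace M ⊔ R) ≤ M.rank + finrank F R :=
    finrank_rowSpace M ▸ Submodule.finrank_add_le_finrank_add_finrank _ _
  have hcol (M : Matrix (Fin n) (Fin n) F) : finrank F ↥(colSpace M ⊔ R) ≤ M.rank + finrank F R :=
    finrank_colSpace M ▸ Submodule.finrank_add_le_finrank_add_finrank _ _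
  exact exists_rank_eq_avoids (by linarith [hrow X]) (by linarith [hcol X]) (by linarith [hrow Y])
    (by linarith [hcol Y])

end Avoidance

section LinkGraph

variable (R : Submodule F (Fin n → F)) (m k : ℕ)

abbrev LinkVertex : Type _ :=
  {M : Matrix (Fin n) (Fin n) F // M.rank = m ∧ rowSpace M ⊓ R = ⊥ ∧ colSpace M ⊓ R = ⊥}

def linkGraph : SimpleGraph (LinkVertex R m) where
  Adj M M' := M ≠ M' ∧
    ∃ L₁ L₂ L₃ : Matrix (Fin n) (Fin n) F,
      L₁.rank = k ∧ L₂.rank = k ∧ L₃.rank = k ∧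
      M.val = L₁ + L₂ ∧ M'.val = L₁ + L₃ ∧
      (L₁ + L₂ + L₃).rank = 3 * k ∧
      rowSpace (L₁ + L₂ + L₃) ⊓ R = ⊥ ∧ colSpace (L₁ + L₂ + L₃) ⊓ R = ⊥
  symm := by
    refine ⟨?_⟩
    rintro M M' ⟨hne, L₁, L₂, L₃, h₁, h₂, h₃, hM, hM', hsum⟩
    refine ⟨hne.symm, L₁, L₃, L₂, h₁, h₃, h₂, hM', hM, ?_⟩
    rwa [add_right_comm]
  loopless := ⟨fun _ h => h.1 rfl⟩

variable {R m k}

lemma linkGraph_adj_of_sum (hk : 0 < k) {X Y : LinkVertex R m}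
    {L₁ L₂ L₃ : Matrix (Fin n) (Fin n) F}
    (h₁ : L₁.rank = k) (h₂ : L₂.rank = k) (h₃ : L₃.rank = k) (hX : X.1 = L₁ + L₂)
    (hY : Y.1 = L₁ + L₃) (hrank : (L₁ + L₂ + L₃).rank = 3 * k) (hR : Avoids R R (L₁ + L₂ + L₃)) :
    (linkGraph R m k).Adj X Y := by
  refine ⟨?_, L₁, L₂, L₃, h₁, h₂, h₃, hX, hY, hrank, avoids_iff.1 hR⟩
  rintro rfl
  obtain rfl : L₂ = L₃ := add_left_cancel (hX.symm.trans hY)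
  have hdouble : (L₂ + L₂).rank ≤ L₂.rank := by
    rw [← finrank_colSpace, ← finrank_colSpace]
    exact Submodule.finrank_mono ((colSpace_add_le L₂ L₂).trans_eq (sup_idem _))
  have hsum := rank_add_le L₁ (L₂ + L₂)
  rw [← add_assoc] at hsum
  omega

lemma linkGraph_reachable_of_avoids (hk : 0 < k) (X Y : LinkVertex R (2 * k))
    (hXY : Avoids (rowSpace X.1 ⊔ R) (colSpace X.1 ⊔ R) Y.1) :
    (linkGraph R (2 * k) k).Reachable X Y := by
  have hX : Avoids R R X.1 := avoids_iff.2 X.2.2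
  obtain ⟨A, B, hAB, hA, hB⟩ := exists_add_eq_of_rank_eq_add X.1 (s := k) (t := k) (by omega)
  obtain ⟨C₁, C₂, hC, hC₁, hC₂⟩ := exists_add_eq_of_rank_eq_add Y.1 (s := k) (t := k) (by omega)
  have hXsum : (A + B).rank = A.rank + B.rank := by rw [← hAB]; omega
  have hYsum : (C₁ + C₂).rank = C₁.rank + C₂.rank := by rw [← hC]; omega
  obtain ⟨hArow, hAcol⟩ := rowSpace_le_and_colSpace_le_of_rank_add hXsum
  obtain ⟨hC₁row, hC₁col⟩ := rowSpace_le_and_colSpace_le_of_rank_add hYsum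
  rw [← hAB] at hArow hAcol
  rw [← hC] at hC₁row hC₁col
  have hAR : Avoids R R A := hX.of_le hArow hAcol
  have hC₁X : Avoids (rowSpace X.1 ⊔ R) (colSpace X.1 ⊔ R) C₁ := hXY.of_le hC₁row hC₁col
  have hAX {M : Matrix (Fin n) (Fin n) F} (hM : Avoids (rowSpace X.1 ⊔ R) (colSpace X.1 ⊔ R) M) :
      Avoids (rowSpace A ⊔ R) (colSpace A ⊔ R) M :=
    hM.mono (sup_le_sup_right hArow R) (sup_le_sup_right hAcol R)
  obtain ⟨hXC₁rank, hXC₁⟩ := hX.add hC₁X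
  obtain ⟨hZrank, hZ⟩ := hAR.add (hAX hC₁X)
  obtain ⟨hAYrank, hAY⟩ := hAR.add (hAX hXY)
  let Z : LinkVertex R (2 * k) := ⟨A + C₁, by omega, avoids_iff.1 hZ⟩
  have hXZ : (linkGraph R (2 * k) k).Adj X Z :=
    linkGraph_adj_of_sum hk hA hB hC₁ hAB rfl (by rw [← hAB]; omega) (by rwa [← hAB])
  have hCA : C₁ + A + C₂ = A + Y.1 := by rw [hC]; abel
  have hZY : (linkGraph R (2 * k) k).Adj Z Y :=
    linkGraph_adj_of_sum hk hC₁ hA hC₂ (add_comm A C₁) hC (by rw [hCA]; omega) (by rwa [hCA])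
  exact hXZ.reachable.trans hZY.reachable

lemma linkGraph_connected (hk : 0 < k) (hm : m = 2 * k) (hR : finrank F R + 4 * k ≤ n) :
    (linkGraph R m k).Connected := by
  subst hm
  have hpre : (linkGraph R (2 * k) k).Preconnected := fun X Y => by
    obtain ⟨Z, hZ, hZX, hZY⟩ := exists_rank_eq_avoids_sup R X.1 Y.1 (m := 2 * k)
      (by rw [X.2.1]; omega) (by rw [Y.2.1]; omega)
    let Z' : LinkVertex R (2 * k) := ⟨Z, hZ, avoids_iff.1 (hZX.mono le_sup_right le_sup_right)⟩
    exact (linkGraph_reachable_of_avoids hk X Z' hZX).trans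
      (linkGraph_reachable_of_avoids hk Y Z' hZY).symm
  obtain ⟨Z, hZ, hZR, -⟩ := exists_rank_eq_avoids_sup R 0 0 (m := 2 * k)
    (by rw [rank_zero]; omega) (by rw [rank_zero]; omega)
  exact (SimpleGraph.connected_iff _).2
    ⟨hpre, ⟨⟨Z, hZ, avoids_iff.1 (hZR.mono le_sup_right le_sup_right)⟩⟩⟩

lemma linkGraph_not_colorable_two (hk : 0 < k) (hm : m = 2 * k) (hR : finrank F R + 3 * k ≤ n) :
    ¬ (linkGraph R m k).Colorable 2 := by
  subst hm
  obtain ⟨L₀, h₀, hL₀, -⟩ := exists_rank_eq_avoids_sup R 0 0 (m := k)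
    (by rw [rank_zero]; omega) (by rw [rank_zero]; omega)
  replace hL₀ : Avoids R R L₀ := hL₀.mono le_sup_right le_sup_right
  obtain ⟨L₁, h₁, hL₁, -⟩ := exists_rank_eq_avoids_sup R L₀ L₀ (m := k) (by omega) (by omega)
  obtain ⟨h₀₁rank, h₀₁⟩ := hL₀.add hL₁
  obtain ⟨L₂, h₂, hL₂, -⟩ := exists_rank_eq_avoids_sup R (L₀ + L₁) (L₀ + L₁) (m := k)
    (by omega) (by omega)
  obtain ⟨h₀₁₂rank, h₀₁₂⟩ := h₀₁.add hL₂
  rw [rowSpace_add_of_rank_add h₀₁rank, colSpace_add_of_rank_add h₀₁rank] at hL₂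
  obtain ⟨h₀₂rank, h₀₂⟩ :=
    hL₀.add (hL₂.mono (by gcongr; exact le_sup_left) (by gcongr; exact le_sup_left))
  obtain ⟨h₁₂rank, h₁₂⟩ := (hL₁.mono le_sup_right le_sup_right).add
    (hL₂.mono (by gcongr; exact le_sup_right) (by gcongr; exact le_sup_right))
  let V₀₁ : LinkVertex R (2 * k) := ⟨L₀ + L₁, by omega, avoids_iff.1 h₀₁⟩
  let V₀₂ : LinkVertex R (2 * k) := ⟨L₀ + L₂, by omega, avoids_iff.1 h₀₂⟩
  let V₁₂ : LinkVertex R (2 * k) := ⟨L₁ + L₂, by omega, avoids_iff.1 h₁₂⟩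
  have hT : (L₀ + L₁ + L₂).rank = 3 * k := by omega
  have hT₁ : L₁ + L₀ + L₂ = L₀ + L₁ + L₂ := by abel
  have hT₂ : L₂ + L₀ + L₁ = L₀ + L₁ + L₂ := by abel
  have e₁ : (linkGraph R (2 * k) k).Adj V₀₁ V₀₂ :=
    linkGraph_adj_of_sum hk h₀ h₁ h₂ rfl rfl hT h₀₁₂
  have e₂ : (linkGraph R (2 * k) k).Adj V₀₁ V₁₂ :=
    linkGraph_adj_of_sum hk h₁ h₀ h₂ (add_comm _ _) rfl (by rwa [hT₁]) (by rwa [hT₁])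
  have e₃ : (linkGraph R (2 * k) k).Adj V₀₂ V₁₂ :=
    linkGraph_adj_of_sum hk h₂ h₀ h₁ (add_comm _ _) (add_comm _ _) (by rwa [hT₂]) (by rwa [hT₂])
  classical
  exact fun hc => hc.cliqueFree (by norm_num) _ (SimpleGraph.is3Clique_triple_iff.2 ⟨e₁, e₂, e₃⟩)

end LinkGraph

lemma linkG2_eq_linkGraph (b r n j : ℕ) :
    linkG2 b r n j = linkGraph (stdSpan (GaloisField 2 b) n (2 ^ (r + 1) - 2 ^ (r + 1 - j)))
      (2 ^ (r - j)) (2 ^ (r - j - 1)) :=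
  rfl

lemma finrank_stdSpan_le (d : ℕ) : finrank F (stdSpan F n d) ≤ d := by
  let e : Fin d → Fin n → F := fun a => if h : (a : ℕ) < n then Pi.single ⟨a, h⟩ 1 else 0
  calc finrank F (stdSpan F n d) ≤ finrank F (Submodule.span F (Set.range e)) := by
        refine Submodule.finrank_mono (Submodule.span_mono ?_)
        rintro _ ⟨a, ha, rfl⟩
        exact ⟨⟨a, ha⟩, by simp [e, a.isLt]⟩
    _ ≤ d := (finrank_range_le_card e).trans (Fintype.card_fin d).le

theorem stmt17_general (r b n j : ℕ) (hn : 2 ^ (r + 1) ≤ n)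
    (hj : j + 1 ≤ r) :
    (linkG2 b r n j).Connected ∧ ¬ (linkG2 b r n j).Colorable 2 := by
  have hk : 0 < 2 ^ (r - j - 1) := by positivity
  have h2k : 2 ^ (r - j) = 2 * 2 ^ (r - j - 1) := by
    rw [← pow_succ']
    congr 1
    omega
  have h4k : 2 ^ (r + 1 - j) = 4 * 2 ^ (r - j - 1) := by
    rw [show r + 1 - j = r - j - 1 + 2 by omega, pow_add]
    ring
  have hd : 2 ^ (r + 1 - j) ≤ 2 ^ (r + 1) := Nat.pow_le_pow_right two_pos (by omega)
  have hR := finrank_stdSpan_le (F := GaloisField 2 b) (n := n) (2 ^ (r + 1) - 2 ^ (r + 1 - j))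
  rw [linkG2_eq_linkGraph]
  exact ⟨linkGraph_connected hk h2k (by omega), linkGraph_not_colorable_two hk h2k (by omega)⟩

/-- For `q = 2^b` with `b ≥ 2`, `r ≥ 1`, `n ≥ 2^{r+1}` and
`−1 ≤ i ≤ r−2` (written with `j = i + 1`, so `0 ≤ j ≤ r−1`), the graph
`linkG2 b r n j` is connected and non-bipartite (not 2-colorable). -/
theorem stmt17 (r b n j : ℕ) (hr : 1 ≤ r) (hb : 2 ≤ b) (hn : 2 ^ (r + 1) ≤ n)
    (hj : j + 1 ≤ r) :
    (linkG2 b r n j).Connected ∧ ¬ (linkG2 b r n j).Colorable 2 :=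
  stmt17_general r b n j hn hj
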